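/- For r ≥ 5, the subgraph of BF(r) induced by the vertices at levels 0 through r-2 is isomorphic to the disjoint union of 4 copies of BF(r-2), and no edge of BF(r) between levels r-1 and r is incident to a vertex in levels 0 through r-2 other than via level r-1. -/

import Mathlib

open SimpleGraph

/-- Zero-forcing closure: `ZFForced G S v` means `v` is eventually forced
starting from the initially-forced set `S`. A forced vertex `u` whose neighbors,
with the single exception of `v`, are all forced, forces `v`. -/
inductive ZFForced {V : Type*} (G : SimpleGraph V) (S : Set V) : V → Prop
  | init {v : V} : v ∈ S → ZFForced G S v
  | force {u v : V} : ZFForced G S u → G.Adj u v →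
      (∀ w, G.Adj u w → w ≠ v → ZFForced G S w) → ZFForced G S v

/-- `S` is a zero forcing set of `G` if its closure is all of `V`. -/
def IsZeroForcingSet {V : Type*} (G : SimpleGraph V) (S : Set V) : Prop :=
  ∀ v : V, ZFForced G S v

/-- `K` is an edge-forcing set of `G`: a set of pairwise non-adjacent
(vertex-disjoint) edges of `G` whose endpoint set is a zero forcing set. -/
def IsEdgeForcingSet {V : Type*} (G : SimpleGraph V) (K : Set (Sym2 V)) : Prop :=
  K ⊆ G.edgeSet ∧
  K.Pairwise (fun e f => ∀ v : V, v ∈ e → v ∉ f) ∧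
  IsZeroForcingSet G {v : V | ∃ e ∈ K, v ∈ e}

/-- The edge-forcing number: minimum cardinality of an edge-forcing set. -/
noncomputable def edgeForcingNumber {V : Type*} (G : SimpleGraph V) : ℕ :=
  sInf {n : ℕ | ∃ K : Set (Sym2 V), IsEdgeForcingSet G K ∧ K.ncard = n}

/-- The `r`-dimensional butterfly network: vertices `(w, i)` with
`w : Fin r → Bool` and level `i : Fin (r+1)`; `(w,i)` is adjacent to `(w',i+1)`
iff `w = w'` or `w` and `w'` differ exactly in bit `i+1` (index `i`, 0-based). -/
def butterfly (r : ℕ) : SimpleGraph ((Fin r → Bool) × Fin (r + 1)) :=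
  SimpleGraph.fromRel (fun p q =>
    (p.2 : ℕ) + 1 = (q.2 : ℕ) ∧
      (p.1 = q.1 ∨ ∀ k : Fin r, (p.1 k ≠ q.1 k ↔ (k : ℕ) = (p.2 : ℕ))))

/-! For the levels `0, …, r - 2`, an edge of `BF(r)` between levels `i` and `i + 1` changes at most
bit `i + 1 ≤ r - 2`, so the top two bits of the word are constant along it. Splitting each word
into its low `r - 2` bits and its top two bits therefore identifies the induced subgraph with
four disjoint copies of `BF(r - 2)`, one for each value of the top two bits. -/

section Append

variable {α : Type*} {m k : ℕ}

theorem Fin.append_eq_append_iff {u u' : Fin m → α} {v v' : Fin k → α} :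
    Fin.append u v = Fin.append u' v' ↔ u = u' ∧ v = v' := by
  simp only [funext_iff, Fin.forall_fin_add, Fin.append_left, Fin.append_right]

theorem Fin.append_differsExactlyAt_iff {u u' : Fin m → α} {v v' : Fin k → α} {i : ℕ}
    (hi : i < m) :
    (∀ j : Fin (m + k), (Fin.append u v j ≠ Fin.append u' v' j ↔ (j : ℕ) = i)) ↔
      (∀ j : Fin m, (u j ≠ u' j ↔ (j : ℕ) = i)) ∧ v = v' := by
  have high : ∀ j : Fin k, ((m + j : ℕ) = i ↔ False) := fun j => iff_false_intro (by omega)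
  simp only [Fin.forall_fin_add, Fin.append_left, Fin.append_right, Fin.val_castAdd,
    Fin.val_natAdd, high, iff_false, not_not, funext_iff]

end Append

def butterflyStep (r : ℕ) (p q : (Fin r → Bool) × Fin (r + 1)) : Prop :=
  (p.2 : ℕ) + 1 = (q.2 : ℕ) ∧ (p.1 = q.1 ∨ ∀ k : Fin r, (p.1 k ≠ q.1 k ↔ (k : ℕ) = (p.2 : ℕ)))

theorem butterfly_adj_iff {r : ℕ} {p q : (Fin r → Bool) × Fin (r + 1)} :
    (butterfly r).Adj p q ↔ butterflyStep r p q ∨ butterflyStep r q p := by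
  refine (SimpleGraph.fromRel_adj _ _ _).trans (and_iff_right_of_imp ?_)
  rintro (⟨h, -⟩ | ⟨h, -⟩) rfl <;> omega

theorem butterflyStep_append_iff {n : ℕ} {u u' : Fin n → Bool} {v v' : Fin 2 → Bool}
    {i j : Fin (n + 1)} :
    butterflyStep (n + 2) (Fin.append u v, Fin.castLE (by omega) i)
        (Fin.append u' v', Fin.castLE (by omega) j) ↔
      butterflyStep n (u, i) (u', j) ∧ v = v' := by
  simp only [butterflyStep, Fin.val_castLE]
  by_cases hij : (i : ℕ) + 1 = j
  · rw [Fin.append_eq_append_iff, Fin.append_differsExactlyAt_iff (by omega)]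
    tauto
  · simp only [hij, false_and]

theorem butterfly_adj_append_iff {n : ℕ} {u u' : Fin n → Bool} {v v' : Fin 2 → Bool}
    {i j : Fin (n + 1)} :
    (butterfly (n + 2)).Adj (Fin.append u v, Fin.castLE (by omega) i)
        (Fin.append u' v', Fin.castLE (by omega) j) ↔
      (butterfly n).Adj (u, i) (u', j) ∧ v = v' := by
  rw [butterfly_adj_iff, butterfly_adj_iff, butterflyStep_append_iff, butterflyStep_append_iff]
  grind

theorem SimpleGraph.fromRel_fst_eq_and_adj_adj_iff {ι V : Type*} (G : SimpleGraph V)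
    {a b : ι × V} :
    (SimpleGraph.fromRel fun p q : ι × V => p.1 = q.1 ∧ G.Adj p.2 q.2).Adj a b ↔
      G.Adj a.2 b.2 ∧ a.1 = b.1 := by
  rw [SimpleGraph.fromRel_adj]
  constructor
  · rintro ⟨-, ⟨h, hadj⟩ | ⟨h, hadj⟩⟩
    · exact ⟨hadj, h⟩
    · exact ⟨hadj.symm, h.symm⟩
  · rintro ⟨hadj, h⟩
    exact ⟨fun hab => hadj.ne (congrArg Prod.snd hab), Or.inl ⟨h, hadj⟩⟩

-- The copy containing a vertex is determined by the top two bits of its word; any labelling of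
-- these bit pairs by `Fin 4` will do.
noncomputable def copyLabel : Fin 4 ≃ (Fin 2 → Bool) :=
  Fintype.equivOfCardEq (by simp)

noncomputable def lowLevelsEquiv (n : ℕ) :
    Fin 4 × ((Fin n → Bool) × Fin (n + 1)) ≃
      {p : (Fin (n + 2) → Bool) × Fin (n + 2 + 1) | (p.2 : ℕ) ≤ n} where
  toFun a := ⟨(Fin.append a.2.1 (copyLabel a.1), Fin.castLE (by omega) a.2.2), by
    simpa using Fin.is_le a.2.2⟩
  invFun p := (copyLabel.symm fun k => p.1.1 (Fin.natAdd n k),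
    (fun k => p.1.1 (Fin.castAdd 2 k), ⟨p.1.2, Nat.lt_succ_of_le p.2⟩))
  left_inv a := by simp
  right_inv p := by ext <;> simp [Fin.append_castAdd_natAdd]

noncomputable def fourCopiesIso (n : ℕ) :
    SimpleGraph.fromRel (fun p q : Fin 4 × ((Fin n → Bool) × Fin (n + 1)) =>
        p.1 = q.1 ∧ (butterfly n).Adj p.2 q.2) ≃g
      (butterfly (n + 2)).induce {p | (p.2 : ℕ) ≤ n} where
  toEquiv := lowLevelsEquiv n
  map_rel_iff' {a b} := by
    obtain ⟨c, u, i⟩ := a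
    obtain ⟨c', u', i'⟩ := b
    change (butterfly (n + 2)).Adj (Fin.append u (copyLabel c), Fin.castLE _ i)
      (Fin.append u' (copyLabel c'), Fin.castLE _ i') ↔ _
    rw [butterfly_adj_append_iff, SimpleGraph.fromRel_fst_eq_and_adj_adj_iff,
      copyLabel.apply_eq_iff_eq]

theorem BF_four_copies_decomposition (r : ℕ) (hr : 5 ≤ r) :
    Nonempty ((SimpleGraph.induce
        {p : (Fin r → Bool) × Fin (r + 1) | (p.2 : ℕ) ≤ r - 2} (butterfly r)) ≃g
      SimpleGraph.fromRel
        (fun p q : Fin 4 × ((Fin (r - 2) → Bool) × Fin (r - 2 + 1)) =>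
          p.1 = q.1 ∧ (butterfly (r - 2)).Adj p.2 q.2)) ∧
    ∀ p q : (Fin r → Bool) × Fin (r + 1), (butterfly r).Adj p q →
      (p.2 : ℕ) = r - 1 → (q.2 : ℕ) = r →
        ¬ ((p.2 : ℕ) ≤ r - 2 ∨ (q.2 : ℕ) ≤ r - 2) := by
  refine ⟨?_, fun p q _ hp hq => by omega⟩
  obtain ⟨n, rfl⟩ : ∃ n, r = n + 2 := ⟨r - 2, by omega⟩
  -- `n + 2 - 2` reduces to `n`, so the types match definitionally.
  exact ⟨(fourCopiesIso n).symm⟩
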